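/- For any extension ILX of IL: if Γ ≺_S Δ and S ⊢_ILX φ, then Γ ≺_{S∪{φ}} Δ. Moreover, if Γ ≺_S Δ then Γ ≺_{S ∪ □S} Δ, where □S = {□A : A ∈ S}. -/

import Mathlib

inductive ILForm : Type
  | bot : ILForm
  | var : ℕ → ILForm
  | imp : ILForm → ILForm → ILForm
  | box : ILForm → ILForm
  | rhd : ILForm → ILForm → ILForm
  deriving DecidableEq

namespace ILForm

def neg (A : ILForm) : ILForm := A.imp ILForm.bot
def or (A B : ILForm) : ILForm := A.neg.imp B
def and (A B : ILForm) : ILForm := (A.imp B.neg).neg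
def dia (A : ILForm) : ILForm := A.neg.box.neg

end ILForm

/-- A Boolean valuation: respects `⊥` and `→`, arbitrary on variables, boxes and `▷`. -/
def IsBoolVal (v : ILForm → Bool) : Prop :=
  v ILForm.bot = false ∧ ∀ A B : ILForm, v (A.imp B) = (!(v A) || v B)

/-- Classical tautologies in the modal language. -/
def ILTaut (A : ILForm) : Prop := ∀ v, IsBoolVal v → v A = true

/-- Provability in the interpretability logic IL. -/
inductive ILProv : ILForm → Prop
  | taut {A : ILForm} : ILTaut A → ILProv A
  | K {A B : ILForm} : ILProv (((A.imp B).box).imp ((A.box).imp (B.box)))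
  | L {A : ILForm} : ILProv ((((A.box).imp A).box).imp (A.box))
  | J1 {A B : ILForm} : ILProv (((A.imp B).box).imp (A.rhd B))
  | J2 {A B C : ILForm} : ILProv (((A.rhd B).and (B.rhd C)).imp (A.rhd C))
  | J3 {A B C : ILForm} : ILProv (((A.rhd C).and (B.rhd C)).imp ((A.or B).rhd C))
  | J4 {A B : ILForm} : ILProv ((A.rhd B).imp ((A.dia).imp (B.dia)))
  | J5 {A : ILForm} : ILProv ((A.dia).rhd A)
  | mp {A B : ILForm} : ILProv (A.imp B) → ILProv A → ILProv B
  | nec {A : ILForm} : ILProv A → ILProv (A.box)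

/-- An extension of IL: contains all IL theorems, closed under modus ponens and necessitation. -/
structure ILExtension (P : ILForm → Prop) : Prop where
  il : ∀ {A}, ILProv A → P A
  mp : ∀ {A B}, P (A.imp B) → P A → P B
  nec : ∀ {A}, P A → P (A.box)

/-- Derivability from a set of assumptions in the logic `P`. -/
inductive Deriv (P : ILForm → Prop) (S : Set ILForm) : ILForm → Prop
  | thm {A : ILForm} : P A → Deriv P S A
  | mem {A : ILForm} : A ∈ S → Deriv P S A
  | mp {A B : ILForm} : Deriv P S (A.imp B) → Deriv P S A → Deriv P S B

def ILConsistent (P : ILForm → Prop) (S : Set ILForm) : Prop := ¬ Deriv P S ILForm.bot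

/-- Maximal consistent set w.r.t. the logic `P`. -/
def ILMCS (P : ILForm → Prop) (S : Set ILForm) : Prop :=
  ILConsistent P S ∧ ∀ T : Set ILForm, S ⊂ T → ¬ ILConsistent P T

/-- Finite disjunction; the empty disjunction is `⊥`. -/
def bigOr : List ILForm → ILForm
  | [] => ILForm.bot
  | A :: l => A.or (bigOr l)

/-- `Assuring Γ Δ S` ("Γ ≺_S Δ"): Δ is an S-assuring successor of Γ. -/
def Assuring (Γ Δ : Set ILForm) (S : Set ILForm) : Prop :=
  ∀ (A : ILForm) (L : List ILForm), (∀ B ∈ L, B ∈ S) →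
    (A.neg.rhd (bigOr (L.map ILForm.neg))) ∈ Γ → A ∈ Δ ∧ A.box ∈ Δ

/-- `Succ Γ Δ` ("Γ ≺ Δ"): whenever □A ∈ Γ, both A and □A are in Δ. -/
def Succ (Γ Δ : Set ILForm) : Prop :=
  ∀ A : ILForm, A.box ∈ Γ → A ∈ Δ ∧ A.box ∈ Δ

/-!
Call `B` reducible to `S` if `⊢ ¬B ▷ ⋁_{C ∈ L} ¬C` for some finite `L ⊆ S`. By J3 and J2, if every
formula of a finite list `L` is reducible to `S`, then `⋁_{B ∈ L} ¬B ▷ ⋁_{C ∈ L'} ¬C` for some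
finite `L' ⊆ S`, so `Γ ≺_S Δ` implies `Γ ≺_T Δ` whenever every member of `T` is reducible to `S`.
Reducibility to `S` is closed under modus ponens, as `¬B → ¬(A → B) ∨ ¬A`, hence holds for every
consequence of `S`; and `□C` is reducible to `S` for `C ∈ S`, since `¬□C → ◇¬C` and `◇¬C ▷ ¬C` (J5).
-/

namespace IsBoolVal

variable {v : ILForm → Bool} (hv : IsBoolVal v)
include hv

lemma bot : v ILForm.bot = false := hv.1

lemma imp (A B : ILForm) : v (A.imp B) = (!v A || v B) := hv.2 A B

lemma neg (A : ILForm) : v A.neg = !v A := by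
  simp [ILForm.neg, hv.imp, hv.bot]

lemma or (A B : ILForm) : v (A.or B) = (v A || v B) := by
  simp [ILForm.or, hv.imp, hv.neg]

lemma and (A B : ILForm) : v (A.and B) = (v A && v B) := by
  simp [ILForm.and, hv.imp, hv.neg]

lemma bigOr (l : List ILForm) : v (_root_.bigOr l) = l.any v := by
  induction l with
  | nil => simp [_root_.bigOr, hv.bot]
  | cons A l ih => simp [_root_.bigOr, hv.or, ih]

end IsBoolVal

namespace ILExtension

variable {P : ILForm → Prop} (hP : ILExtension P) {A B C : ILForm}
include hP

lemma taut (h : ILTaut A) : P A := hP.il (ILProv.taut h)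

lemma mp₂ (h : P ((A.and B).imp C)) (hA : P A) (hB : P B) : P C := by
  refine hP.mp (hP.mp (hP.mp (hP.taut fun v hv => ?_) h) hA) hB
  simp only [hv.imp, hv.and]
  cases v A <;> cases v B <;> cases v C <;> rfl

lemma rhd_of_imp (h : P (A.imp B)) : P (A.rhd B) :=
  hP.mp (hP.il ILProv.J1) (hP.nec h)

lemma rhd_imp_rhd_of_rhd (h : P (B.rhd C)) : P ((A.rhd B).imp (A.rhd C)) := by
  refine hP.mp (hP.mp (hP.taut fun v hv => ?_) (hP.il (ILProv.J2 (A := A) (B := B) (C := C)))) h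
  simp only [hv.imp, hv.and]
  cases v (A.rhd B) <;> cases v (B.rhd C) <;> cases v (A.rhd C) <;> rfl

lemma rhd_trans (h₁ : P (A.rhd B)) (h₂ : P (B.rhd C)) : P (A.rhd C) :=
  hP.mp (hP.rhd_imp_rhd_of_rhd h₂) h₁

lemma rhd_of_rhd_of_imp (h₁ : P (A.rhd B)) (h₂ : P (B.imp C)) : P (A.rhd C) :=
  hP.rhd_trans h₁ (hP.rhd_of_imp h₂)

lemma or_rhd (h₁ : P (A.rhd C)) (h₂ : P (B.rhd C)) : P ((A.or B).rhd C) :=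
  hP.mp₂ (hP.il ILProv.J3) h₁ h₂

lemma neg_box_rhd_neg (C : ILForm) : P (C.box.neg.rhd C.neg) := by
  have hdn : P (C.neg.neg.imp C) := hP.taut fun v hv => by simp [hv.imp, hv.neg]
  have hbox : P (C.neg.neg.box.imp C.box) := hP.mp (hP.il ILProv.K) (hP.nec hdn)
  have hdia : P (C.box.neg.imp C.neg.dia) := by
    refine hP.mp (hP.taut fun v hv => ?_) hbox
    simp only [ILForm.dia, hv.imp, hv.neg]
    cases v C.neg.neg.box <;> cases v C.box <;> rfl
  exact hP.rhd_trans (hP.rhd_of_imp hdia) (hP.il ILProv.J5)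

end ILExtension

section MCS

variable {P : ILForm → Prop} {Γ S : Set ILForm} {A B : ILForm}

lemma Deriv.of_union_singleton (h : Deriv P (S ∪ {A}) B) (hA : Deriv P S A) : Deriv P S B := by
  induction h with
  | thm h => exact .thm h
  | mem h => exact h.elim .mem fun h => h ▸ hA
  | mp _ _ ih₁ ih₂ => exact .mp ih₁ ih₂

lemma ILMCS.mem_of_deriv (hΓ : ILMCS P Γ) (h : Deriv P Γ A) : A ∈ Γ := by
  by_contra hA
  have hssub : Γ ⊂ Γ ∪ {A} :=
    Set.ssubset_iff_subset_ne.2 ⟨Set.subset_union_left, fun he => hA (he ▸ Or.inr rfl)⟩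
  exact hΓ.1 ((not_not.1 (hΓ.2 _ hssub)).of_union_singleton h)

lemma ILMCS.mem_of_prov_imp (hΓ : ILMCS P Γ) (h : P (A.imp B)) (hA : A ∈ Γ) : B ∈ Γ :=
  hΓ.mem_of_deriv (.mp (.thm h) (.mem hA))

end MCS

def RhdReducible (P : ILForm → Prop) (S : Set ILForm) (B : ILForm) : Prop :=
  ∃ L : List ILForm, (∀ C ∈ L, C ∈ S) ∧ P (B.neg.rhd (bigOr (L.map ILForm.neg)))

namespace RhdReducible

variable {P : ILForm → Prop} (hP : ILExtension P) {S : Set ILForm}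
include hP

lemma exists_bigOr_rhd {L : List ILForm} (hL : ∀ B ∈ L, RhdReducible P S B) :
    ∃ L' : List ILForm, (∀ C ∈ L', C ∈ S) ∧
      P ((bigOr (L.map ILForm.neg)).rhd (bigOr (L'.map ILForm.neg))) := by
  induction L with
  | nil =>
    refine ⟨[], by simp, hP.rhd_of_imp (hP.taut fun v hv => ?_)⟩
    simp [bigOr, hv.imp]
  | cons B L ih =>
    obtain ⟨L₁, hL₁S, hB⟩ := hL B List.mem_cons_self
    obtain ⟨L₂, hL₂S, hL₂⟩ := ih fun C hC => hL C (List.mem_cons_of_mem _ hC)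
    refine ⟨L₁ ++ L₂, fun C hC => (List.mem_append.1 hC).elim (hL₁S C) (hL₂S C), ?_⟩
    refine hP.or_rhd (hP.rhd_of_rhd_of_imp hB (hP.taut fun v hv => ?_))
      (hP.rhd_of_rhd_of_imp hL₂ (hP.taut fun v hv => ?_)) <;>
    simp only [hv.imp, hv.bigOr, List.map_append, List.any_append] <;>
    cases (L₁.map ILForm.neg).any v <;> cases (L₂.map ILForm.neg).any v <;> rfl

lemma of_rhd {B : ILForm} {L : List ILForm} (h : P (B.neg.rhd (bigOr (L.map ILForm.neg))))
    (hL : ∀ C ∈ L, RhdReducible P S C) : RhdReducible P S B :=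
  let ⟨L', hL'S, hL'⟩ := exists_bigOr_rhd hP hL
  ⟨L', hL'S, hP.rhd_trans h hL'⟩

lemma of_mem {B : ILForm} (hB : B ∈ S) : RhdReducible P S B := by
  refine ⟨[B], by simpa, hP.rhd_of_imp (hP.taut fun v hv => ?_)⟩
  simp [bigOr, hv.imp, hv.or, hv.bot]

lemma of_deriv {φ : ILForm} (h : Deriv P S φ) : RhdReducible P S φ := by
  induction h with
  | thm h =>
    refine ⟨[], by simp, hP.rhd_of_imp (hP.mp (hP.taut fun v hv => ?_) h)⟩
    simp only [bigOr, List.map_nil, hv.imp, hv.neg, hv.bot]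
    cases v _ <;> rfl
  | mem h => exact of_mem hP h
  | @mp A B _ _ ihAB ihA =>
    refine of_rhd hP (L := [A.imp B, A]) (hP.rhd_of_imp (hP.taut fun v hv => ?_)) (by simp [*])
    simp only [List.map_cons, List.map_nil, bigOr, hv.imp, hv.or, hv.neg, hv.bot]
    cases v A <;> cases v B <;> rfl

lemma box {C : ILForm} (hC : C ∈ S) : RhdReducible P S C.box :=
  of_rhd hP (L := [C]) (hP.rhd_of_rhd_of_imp (hP.neg_box_rhd_neg C)
    (hP.taut fun v hv => by simp [bigOr, hv.imp, hv.or, hv.bot])) (by simpa using of_mem hP hC)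

end RhdReducible

lemma Assuring.of_forall_rhdReducible {P : ILForm → Prop} (hP : ILExtension P)
    {Γ Δ S T : Set ILForm} (hΓ : ILMCS P Γ) (h : Assuring Γ Δ S)
    (hT : ∀ B ∈ T, RhdReducible P S B) : Assuring Γ Δ T := by
  intro A L hLT hAL
  obtain ⟨L', hL'S, hLL'⟩ := RhdReducible.exists_bigOr_rhd hP fun B hB => hT B (hLT B hB)
  exact h A L' hL'S (hΓ.mem_of_prov_imp (hP.rhd_imp_rhd_of_rhd hLL') hAL)

theorem assuring_extend_consequence_and_nec_general (P : ILForm → Prop) (hP : ILExtension P)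
    (Γ Δ : Set ILForm) (hΓ : ILMCS P Γ) (S : Set ILForm) :
    (∀ φ : ILForm, Assuring Γ Δ S → Deriv P S φ → Assuring Γ Δ (S ∪ {φ})) ∧
    (Assuring Γ Δ S → Assuring Γ Δ (S ∪ {X | ∃ A ∈ S, X = ILForm.box A})) := by
  refine ⟨fun φ h hφ => h.of_forall_rhdReducible hP hΓ ?_,
    fun h => h.of_forall_rhdReducible hP hΓ ?_⟩
  · rintro B (hB | rfl)
    exacts [.of_mem hP hB, .of_deriv hP hφ]
  · rintro B (hB | ⟨C, hC, rfl⟩)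
    exacts [.of_mem hP hB, .box hP hC]

/-- Labels may be closed under ILX-consequence and under necessitation. -/
theorem assuring_extend_consequence_and_nec (P : ILForm → Prop) (hP : ILExtension P)
    (Γ Δ : Set ILForm) (hΓ : ILMCS P Γ) (hΔ : ILMCS P Δ) (S : Set ILForm) :
    (∀ φ : ILForm, Assuring Γ Δ S → Deriv P S φ → Assuring Γ Δ (S ∪ {φ})) ∧
    (Assuring Γ Δ S → Assuring Γ Δ (S ∪ {X | ∃ A ∈ S, X = ILForm.box A})) :=
  assuring_extend_consequence_and_nec_general P hP Γ Δ hΓ S
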